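/- arXiv:1210.1438 — 2 statements merged into one kernel-verified Lean document; each statement's English description precedes it below -/
import Mathlib

section
/- Let J be a B(H)-ideal that is idempotent, i.e., every element of J is a finite sum Σᵢ A_iB_i with all A_i, B_i ∈ J. Then for every S ∈ J, J(S)J = JS + SJ + J(S)J; in particular AS ∈ J(S)J and SA ∈ J(S)J for every A ∈ J. -/
open scoped BigOperators
open TopologicalSpace

variable {H : Type*} [NormedAddCommGroup H] [InnerProductSpace ℂ H] [CompleteSpace H]

/-- `J` is a two-sided ideal of `B(H)`: an additive subgroup closed under left and
right multiplication by arbitrary bounded operators. -/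
def IsBHIdeal (J : Set (H →L[ℂ] H)) : Prop :=
  (0 : H →L[ℂ] H) ∈ J ∧
  (∀ x ∈ J, ∀ y ∈ J, x + y ∈ J) ∧
  (∀ x ∈ J, -x ∈ J) ∧
  ∀ (A : H →L[ℂ] H), ∀ x ∈ J, A * x ∈ J ∧ x * A ∈ J

/-- `I` is a `J`-ideal: an additive subgroup of `B(H)` contained in `J` and closed
under left and right multiplication by elements of `J`. -/
def IsSubideal (J I : Set (H →L[ℂ] H)) : Prop :=
  I ⊆ J ∧ (0 : H →L[ℂ] H) ∈ I ∧
  (∀ x ∈ I, ∀ y ∈ I, x + y ∈ I) ∧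
  (∀ x ∈ I, -x ∈ I) ∧
  ∀ A ∈ J, ∀ x ∈ I, A * x ∈ I ∧ x * A ∈ I

/-- A linear `J`-ideal: a `J`-ideal closed under multiplication by complex scalars. -/
def IsLinearSubideal (J I : Set (H →L[ℂ] H)) : Prop :=
  IsSubideal J I ∧ ∀ (c : ℂ), ∀ x ∈ I, c • x ∈ I

/-- A real linear `J`-ideal: a `J`-ideal closed under multiplication by real scalars. -/
def IsRealSubideal (J I : Set (H →L[ℂ] H)) : Prop :=
  IsSubideal J I ∧ ∀ (r : ℝ), ∀ x ∈ I, r • x ∈ I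

/-- `(𝒮)`: the smallest two-sided ideal of `B(H)` containing `𝒮`. -/
def genBH (𝒮 : Set (H →L[ℂ] H)) : Set (H →L[ℂ] H) :=
  ⋂₀ {I | IsBHIdeal I ∧ 𝒮 ⊆ I}

/-- `⟨𝒮⟩_J`: the smallest `J`-ideal containing `𝒮`. -/
def genSub (J 𝒮 : Set (H →L[ℂ] H)) : Set (H →L[ℂ] H) :=
  ⋂₀ {I | IsSubideal J I ∧ 𝒮 ⊆ I}

/-- `(𝒮)_J`: the smallest linear `J`-ideal containing `𝒮`. -/
def genLin (J 𝒮 : Set (H →L[ℂ] H)) : Set (H →L[ℂ] H) :=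
  ⋂₀ {I | IsLinearSubideal J I ∧ 𝒮 ⊆ I}

/-- `(𝒮)_J^ℝ`: the smallest real linear `J`-ideal containing `𝒮`. -/
def genReal (J 𝒮 : Set (H →L[ℂ] H)) : Set (H →L[ℂ] H) :=
  ⋂₀ {I | IsRealSubideal J I ∧ 𝒮 ⊆ I}

/-- `J(𝒮)`: all finite sums `Σ Aᵢ Xᵢ` with `Aᵢ ∈ J` and `Xᵢ ∈ (𝒮)`. -/
def JGen (J 𝒮 : Set (H →L[ℂ] H)) : Set (H →L[ℂ] H) :=
  {T | ∃ (n : ℕ) (A X : Fin n → (H →L[ℂ] H)),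
    (∀ i, A i ∈ J ∧ X i ∈ genBH 𝒮) ∧ T = ∑ i, A i * X i}

/-- `J(𝒮)J`: all finite sums `Σ Aᵢ Xᵢ Bᵢ` with `Aᵢ, Bᵢ ∈ J` and `Xᵢ ∈ (𝒮)`. -/
def JGenJ (J 𝒮 : Set (H →L[ℂ] H)) : Set (H →L[ℂ] H) :=
  {T | ∃ (n : ℕ) (A X B : Fin n → (H →L[ℂ] H)),
    (∀ i, A i ∈ J ∧ X i ∈ genBH 𝒮 ∧ B i ∈ J) ∧ T = ∑ i, A i * X i * B i}

/-- `JS + SJ + J(S)J = {AS + SB + Y : A, B ∈ J, Y ∈ J(S)J}`. -/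
def JSplus (J : Set (H →L[ℂ] H)) (S : H →L[ℂ] H) : Set (H →L[ℂ] H) :=
  {T | ∃ A ∈ J, ∃ B ∈ J, ∃ Y ∈ JGenJ J {S}, T = A * S + S * B + Y}

/-- `K(H)`: the compact operators on `H`. -/
def KH : Set (H →L[ℂ] H) := {T | IsCompactOperator ⇑T}

/-- `T` is a finite-rank operator: its range is finite-dimensional. -/
def IsFiniteRank (T : H →L[ℂ] H) : Prop :=
  FiniteDimensional ℂ (LinearMap.range (T : H →ₗ[ℂ] H))

/-!
Every `T ∈ B(H)` factors as `T = V T* V`: if `V` is the partial isometry of the polar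
decomposition, so that `V |T| = T` and `V* T = |T|`, then `V T* V = V (V* T)* = V |T| = T`.
Hence every two-sided ideal of `B(H)` is self-adjoint, and for `C, D ∈ J`, writing
`D S = V S* D* V` and `S C = V C* S* V` gives `C D S = (C V) S* (D* V)` and
`S C D = (V C*) S* (V D)`, both in `J(S)J`. Idempotence writes each `A ∈ J` as `Σ Cᵢ Dᵢ`, so
`A S, S A ∈ J(S)J`, which is the inclusion `JS + SJ + J(S)J ⊆ J(S)J`.
-/

open ContinuousLinearMap

section PartialIsometry

variable {𝕜 E F G : Type*} [RCLike 𝕜] [NormedAddCommGroup E] [NormedSpace 𝕜 E]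
  [NormedAddCommGroup F] [InnerProductSpace 𝕜 F] [CompleteSpace F]
  [NormedAddCommGroup G] [InnerProductSpace 𝕜 G] [CompleteSpace G]

-- `V` extends the isometry `R x ↦ T x` to the closure `K` of the range of `R` and vanishes on `Kᗮ`.
theorem exists_comp_eq_and_adjoint_comp_eq_of_norm_apply_eq (R : E →L[𝕜] G) (T : E →L[𝕜] F)
    (h : ∀ x, ‖R x‖ = ‖T x‖) : ∃ V : G →L[𝕜] F, V ∘L R = T ∧ adjoint V ∘L T = R := by
  set K := (LinearMap.range (R : E →ₗ[𝕜] G)).topologicalClosure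
  have hRK : ∀ x, R x ∈ K := fun x =>
    (LinearMap.range (R : E →ₗ[𝕜] G)).le_topologicalClosure (LinearMap.mem_range_self _ x)
  set e : E →L[𝕜] K := R.codRestrict K hRK
  have he : DenseRange e := by
    rw [DenseRange, Subtype.dense_iff, ← Set.range_comp]
    intro k hk
    change k ∈ closure (Set.range R)
    rwa [Submodule.topologicalClosure_coe, LinearMap.coe_range] at hk
  set W : K →L[𝕜] F := (T : E →ₗ[𝕜] F).extendOfNorm (e : E →ₗ[𝕜] K)
  have hWe : W ∘L e = T := by
    ext x
    exact LinearMap.extendOfNorm_eq he ⟨1, fun x => by simp [e, h]⟩ x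
  have hW : adjoint W ∘L W = 1 := by
    refine W.norm_map_iff_adjoint_comp_self.mp fun k => ?_
    refine he.induction_on k (isClosed_eq (by fun_prop) (by fun_prop)) fun x => ?_
    rw [← comp_apply, hWe]
    exact (h x).symm
  have hPR : K.orthogonalProjectionOnto ∘L R = e := by
    ext x
    exact congrArg Subtype.val (Submodule.orthogonalProjectionOnto_mem_subspace_eq_self (e x))
  refine ⟨W ∘L K.orthogonalProjectionOnto, ?_, ?_⟩
  · rw [comp_assoc, hPR, hWe]
  · rw [← hWe, adjoint_comp, K.adjoint_orthogonalProjectionOnto, comp_assoc,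
      ← comp_assoc (adjoint W), hW, one_def, id_comp]
    rfl

end PartialIsometry

theorem norm_cfcAbs_apply (T : H →L[ℂ] H) (x : H) : ‖CFC.abs T x‖ = ‖T x‖ := by
  have habs : adjoint (CFC.abs T) ∘L CFC.abs T = adjoint T ∘L T := by
    rw [← star_eq_adjoint, (CFC.abs_nonneg T).isSelfAdjoint.star_eq, ← star_eq_adjoint]
    exact CFC.abs_mul_abs T
  have hsq := apply_norm_sq_eq_inner_adjoint_left (CFC.abs T) x
  rw [habs, ← apply_norm_sq_eq_inner_adjoint_left] at hsq
  exact (pow_left_inj₀ (norm_nonneg _) (norm_nonneg _) two_ne_zero).mp hsq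

theorem exists_eq_mul_star_mul (T : H →L[ℂ] H) : ∃ V : H →L[ℂ] H, T = V * star T * V := by
  obtain ⟨V, hVR, hVT⟩ :=
    exists_comp_eq_and_adjoint_comp_eq_of_norm_apply_eq (CFC.abs T) T (norm_cfcAbs_apply T)
  have hTV : star T * V = CFC.abs T := by
    rw [← (CFC.abs_nonneg T).isSelfAdjoint.star_eq, ← hVT, ← star_eq_adjoint, ← mul_def,
      star_mul, star_star]
  exact ⟨V, by rw [mul_assoc, hTV]; exact hVR.symm⟩

section Algebraic

omit [CompleteSpace H]

variable {J 𝒮 : Set (H →L[ℂ] H)}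

theorem IsBHIdeal.mul_mem_left (hJ : IsBHIdeal J) (A : H →L[ℂ] H) {x : H →L[ℂ] H}
    (hx : x ∈ J) : A * x ∈ J :=
  (hJ.2.2.2 A x hx).1

theorem IsBHIdeal.mul_mem_right (hJ : IsBHIdeal J) {x : H →L[ℂ] H} (hx : x ∈ J)
    (A : H →L[ℂ] H) : x * A ∈ J :=
  (hJ.2.2.2 A x hx).2

theorem zero_mem_JGenJ : (0 : H →L[ℂ] H) ∈ JGenJ J 𝒮 :=
  ⟨0, Fin.elim0, Fin.elim0, Fin.elim0, fun i => i.elim0, by simp⟩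

theorem add_mem_JGenJ {T₁ T₂ : H →L[ℂ] H} (h₁ : T₁ ∈ JGenJ J 𝒮) (h₂ : T₂ ∈ JGenJ J 𝒮) :
    T₁ + T₂ ∈ JGenJ J 𝒮 := by
  obtain ⟨n, A, X, B, hmem, rfl⟩ := h₁
  obtain ⟨m, A', X', B', hmem', rfl⟩ := h₂
  refine ⟨n + m, Fin.append A A', Fin.append X X', Fin.append B B',
    Fin.addCases (by simpa using hmem) (by simpa using hmem'), ?_⟩
  simp [Fin.sum_univ_add]

theorem sum_mem_JGenJ {ι : Type*} (s : Finset ι) {f : ι → H →L[ℂ] H}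
    (h : ∀ i ∈ s, f i ∈ JGenJ J 𝒮) : ∑ i ∈ s, f i ∈ JGenJ J 𝒮 :=
  Finset.sum_induction f (· ∈ JGenJ J 𝒮) (fun _ _ => add_mem_JGenJ) zero_mem_JGenJ h

theorem mul_mul_mem_JGenJ {A X B : H →L[ℂ] H} (hA : A ∈ J) (hX : X ∈ genBH 𝒮) (hB : B ∈ J) :
    A * X * B ∈ JGenJ J 𝒮 :=
  ⟨1, fun _ => A, fun _ => X, fun _ => B, fun _ => ⟨hA, hX, hB⟩, by simp⟩

end Algebraic

theorem IsBHIdeal.star_mem {J : Set (H →L[ℂ] H)} (hJ : IsBHIdeal J) {T : H →L[ℂ] H}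
    (hT : T ∈ J) : star T ∈ J := by
  obtain ⟨V, hV⟩ := exists_eq_mul_star_mul (star T)
  rw [hV, star_star]
  exact hJ.mul_mem_right (hJ.mul_mem_left V hT) V

theorem star_mem_genBH_singleton (S : H →L[ℂ] H) : star S ∈ genBH {S} :=
  fun _ hI => hI.1.star_mem (hI.2 rfl)

section Product

variable {J : Set (H →L[ℂ] H)} {C D : H →L[ℂ] H}

theorem mul_mul_mem_JGenJ_singleton_right (hJ : IsBHIdeal J) (hC : C ∈ J) (hD : D ∈ J)
    (S : H →L[ℂ] H) : C * D * S ∈ JGenJ J {S} := by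
  obtain ⟨V, hV⟩ := exists_eq_mul_star_mul (D * S)
  have hCDS : C * D * S = C * V * star S * (star D * V) := by
    rw [mul_assoc C, hV, star_mul]
    simp only [mul_assoc]
  rw [hCDS]
  exact mul_mul_mem_JGenJ (hJ.mul_mem_right hC V) (star_mem_genBH_singleton S)
    (hJ.mul_mem_right (hJ.star_mem hD) V)

theorem mul_mul_mem_JGenJ_singleton_left (hJ : IsBHIdeal J) (hC : C ∈ J) (hD : D ∈ J)
    (S : H →L[ℂ] H) : S * (C * D) ∈ JGenJ J {S} := by
  obtain ⟨V, hV⟩ := exists_eq_mul_star_mul (S * C)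
  have hSCD : S * (C * D) = V * star C * star S * (V * D) := by
    rw [← mul_assoc, hV, star_mul]
    simp only [mul_assoc]
  rw [hSCD]
  exact mul_mul_mem_JGenJ (hJ.mul_mem_left V (hJ.star_mem hC)) (star_mem_genBH_singleton S)
    (hJ.mul_mem_left V hD)

end Product

theorem stmt_16_general (J : Set (H →L[ℂ] H)) (hJ : IsBHIdeal J)
    (hid : ∀ x ∈ J, ∃ (n : ℕ) (A B : Fin n → (H →L[ℂ] H)),
      (∀ i, A i ∈ J ∧ B i ∈ J) ∧ x = ∑ i, A i * B i)
    (S : H →L[ℂ] H) :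
    JGenJ J {S} = JSplus J S ∧
    ∀ A ∈ J, A * S ∈ JGenJ J {S} ∧ S * A ∈ JGenJ J {S} := by
  have hSJ : ∀ A ∈ J, A * S ∈ JGenJ J {S} ∧ S * A ∈ JGenJ J {S} := by
    intro A hA
    obtain ⟨n, C, D, hCD, rfl⟩ := hid A hA
    rw [Finset.sum_mul, Finset.mul_sum]
    exact ⟨sum_mem_JGenJ _ fun i _ => mul_mul_mem_JGenJ_singleton_right hJ (hCD i).1 (hCD i).2 S,
      sum_mem_JGenJ _ fun i _ => mul_mul_mem_JGenJ_singleton_left hJ (hCD i).1 (hCD i).2 S⟩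
  refine ⟨Set.Subset.antisymm ?_ ?_, hSJ⟩
  · intro T hT
    exact ⟨0, hJ.1, 0, hJ.1, T, hT, by simp⟩
  · rintro T ⟨A, hA, B, hB, Y, hY, rfl⟩
    exact add_mem_JGenJ (add_mem_JGenJ (hSJ A hA).1 (hSJ B hB).2) hY

/-- if `J` is idempotent then `J(S)J = JS + SJ + J(S)J` for every
`S ∈ J`; in particular `AS, SA ∈ J(S)J` for every `A ∈ J`. -/
theorem stmt_16 (J : Set (H →L[ℂ] H)) (hJ : IsBHIdeal J)
    (hid : ∀ x ∈ J, ∃ (n : ℕ) (A B : Fin n → (H →L[ℂ] H)),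
      (∀ i, A i ∈ J ∧ B i ∈ J) ∧ x = ∑ i, A i * B i)
    (S : H →L[ℂ] H) (hS : S ∈ J) :
    JGenJ J {S} = JSplus J S ∧
    ∀ A ∈ J, A * S ∈ JGenJ J {S} ∧ S * A ∈ JGenJ J {S} :=
  stmt_16_general J hJ hid S
end

section
/- Let J be a B(H)-ideal and let 𝒮 = {S₁, …, S_N} ⊆ J be a finite set. If ⟨𝒮⟩_J = (𝒮)_J^ℝ or ⟨𝒮⟩_J = (𝒮)_J, then (𝒮) is J-soft, i.e., (𝒮) = J(𝒮). -/
open scoped BigOperators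
open TopologicalSpace

variable {H : Type*} [NormedAddCommGroup H] [InnerProductSpace ℂ H] [CompleteSpace H]

/-!
By the polar decomposition every operator factors as `T = U T* U`; hence ideals of `B(H)` are
self-adjoint and `(𝒮) J ⊆ J(𝒮)`, since `X B = (U B*)(X* U)`. Consequently `ℤ𝒮 + J(𝒮)` is a
`J`-ideal containing `𝒮`, so it contains `⟨𝒮⟩_J`. The hypothesis puts `n⁻¹ Sⱼ` into `⟨𝒮⟩_J`
for every nonzero integer `n`, so the class of `Sⱼ` in the finitely generated abelian group
`(ℤ𝒮 + J(𝒮)) / J(𝒮)` is divisible by every `n`, hence zero by Krull's intersection theorem.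
Thus `𝒮 ⊆ J(𝒮)`, and as `J(𝒮)` is an ideal of `B(H)` contained in `(𝒮)`, the two coincide.
-/

theorem Module.Finite.exists_one_sub_mul_smul_eq_zero {R M : Type*} [CommRing R]
    [IsNoetherianRing R] [AddCommGroup M] [Module R M] [Module.Finite R M] {a : R} {x : M}
    (hx : ∀ i : ℕ, ∃ y : M, a ^ i • y = x) : ∃ b : R, (1 - a * b) • x = 0 := by
  have hmem : x ∈ (⨅ i : ℕ, Ideal.span {a} ^ i • ⊤ : Submodule R M) := by
    refine Submodule.mem_iInf _ |>.2 fun i => ?_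
    obtain ⟨y, rfl⟩ := hx i
    rw [Ideal.span_singleton_pow]
    exact Submodule.smul_mem_smul (Ideal.mem_span_singleton_self _) Submodule.mem_top
  obtain ⟨⟨r, hr⟩, hrx⟩ := (Ideal.mem_iInf_smul_pow_eq_bot_iff _ x).1 hmem
  obtain ⟨b, rfl⟩ := Ideal.mem_span_singleton.1 hr
  exact ⟨b, by rw [sub_smul, one_smul, hrx, sub_self]⟩

theorem AddCommGroup.eq_zero_of_forall_zsmul_eq {M : Type*} [AddCommGroup M]
    [Module.Finite ℤ M] {x : M} (hx : ∀ n : ℤ, n ≠ 0 → ∃ y : M, n • y = x) : x = 0 := by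
  have hdiv : ∀ a : ℤ, a ≠ 0 → ∃ b : ℤ, (1 - a * b) • x = 0 := fun a ha =>
    Module.Finite.exists_one_sub_mul_smul_eq_zero fun i => hx _ (pow_ne_zero i ha)
  obtain ⟨b, hb⟩ := hdiv 2 two_ne_zero
  obtain ⟨c, hc⟩ := hdiv (1 - 2 * b) (by omega)
  -- `1 - 2b` kills `x`, and so does `1 - (1 - 2b) c`; together they force `x = 0`
  calc x = (1 - (1 - 2 * b) * c) • x + c • (1 - 2 * b) • x := by
        rw [smul_smul, ← add_smul, mul_comm c]; simp
    _ = 0 := by rw [hc, hb, smul_zero, add_zero]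

theorem Submodule.mem_of_forall_exists_zsmul_eq {V : Type*} [AddCommGroup V]
    (p : Submodule ℤ V) {s : Set V} (hs : s.Finite) {x : V} (hx : x ∈ span ℤ s)
    (h : ∀ n : ℤ, n ≠ 0 → ∃ w ∈ p ⊔ span ℤ s, n • w = x) : x ∈ p := by
  have : Module.Finite ℤ (span ℤ s) := Module.Finite.span_of_finite ℤ hs
  set M := (span ℤ s).map p.mkQ
  suffices (⟨p.mkQ x, mem_map_of_mem hx⟩ : M) = 0 by
    simpa using congrArg Subtype.val this
  refine AddCommGroup.eq_zero_of_forall_zsmul_eq fun n hn => ?_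
  obtain ⟨w, hw, rfl⟩ := h n hn
  rw [← comap_map_mkQ] at hw
  exact ⟨⟨p.mkQ w, hw⟩, Subtype.ext (map_zsmul p.mkQ n w).symm⟩

section Polar

open ContinuousLinearMap

variable {E F : Type*} [NormedAddCommGroup E] [InnerProductSpace ℂ E] [CompleteSpace E]
  [NormedAddCommGroup F] [InnerProductSpace ℂ F] [CompleteSpace F]

theorem ContinuousLinearMap.exists_comp_eq_and_adjoint_comp_eq_of_norm_eq
    (P : E →L[ℂ] E) (T : E →L[ℂ] F) (h : ∀ x, ‖P x‖ = ‖T x‖) :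
    ∃ U : E →L[ℂ] F, U ∘L P = T ∧ adjoint U ∘L T = P := by
  set K := (LinearMap.range (P : E →ₗ[ℂ] E)).topologicalClosure
  let e : E →ₗ[ℂ] K := (P : E →ₗ[ℂ] E).codRestrict K
    fun x => Submodule.le_topologicalClosure _ (LinearMap.mem_range_self _ x)
  have he_dense : DenseRange e := by
    have hsub : Set.range P ⊆ K := fun _ ⟨x, hx⟩ =>
      Submodule.le_topologicalClosure _ ⟨x, hx⟩
    refine Dense.mono ?_ ((denseRange_inclusion_iff hsub).2 ?_)
    · rintro _ ⟨⟨_, x, rfl⟩, rfl⟩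
      exact ⟨x, rfl⟩
    · exact (Submodule.topologicalClosure_coe _).subset
  -- `W : K → F` is the isometry `P x ↦ T x`, extended from the range of `P` to its closure
  have hbound : ∀ x, ‖T x‖ ≤ 1 * ‖e x‖ := fun x => by rw [one_mul, ← h]; rfl
  set W : K →L[ℂ] F := (T : E →ₗ[ℂ] F).extendOfNorm e
  have hWe : ∀ x, W (e x) = T x := LinearMap.extendOfNorm_eq he_dense ⟨1, hbound⟩
  have hW_norm : ∀ k, ‖W k‖ = ‖k‖ := fun k =>
    he_dense.induction (fun _ ⟨x, hx⟩ => by rw [← hx, hWe, ← h]; rfl)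
      (isClosed_eq (by fun_prop) (by fun_prop)) k
  have hW_inner : ∀ k l, inner ℂ (W k) (W l) = inner ℂ k l :=
    (LinearMap.norm_map_iff_inner_map_map W).1 hW_norm
  have hproj : ∀ x, K.orthogonalProjectionOnto (P x) = e x := fun x =>
    K.orthogonalProjectionOnto_mem_subspace_eq_self (e x)
  refine ⟨W ∘L K.orthogonalProjectionOnto, ?_, ?_⟩
  · ext x
    simp [hproj, hWe]
  · ext x
    refine ext_inner_right ℂ fun y => ?_
    rw [comp_apply, adjoint_inner_left, comp_apply, ← hWe, hW_inner,
      Submodule.inner_orthogonalProjectionOnto_eq_of_mem_left]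
    rfl

theorem ContinuousLinearMap.exists_mul_star_mul_eq (T : E →L[ℂ] E) :
    ∃ U : E →L[ℂ] E, U * star T * U = T := by
  set P := CFC.abs T
  have hP : IsSelfAdjoint P := (CFC.abs_nonneg T).isSelfAdjoint
  have hnorm : ∀ x, ‖P x‖ = ‖T x‖ := fun x => by
    have hPP : star P * P = star T * T := by rw [hP.star_eq]; exact CFC.abs_mul_abs T
    rw [← sq_eq_sq₀ (norm_nonneg _) (norm_nonneg _), apply_norm_sq_eq_inner_adjoint_left,
      apply_norm_sq_eq_inner_adjoint_left, ← star_eq_adjoint, ← star_eq_adjoint, ← mul_def,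
      ← mul_def, hPP]
  obtain ⟨U, hUP, hUT⟩ := exists_comp_eq_and_adjoint_comp_eq_of_norm_eq P T hnorm
  have hTU : star T * U = P := by
    simpa [star_mul, hP.star_eq] using congrArg star (show star U * T = P from hUT)
  exact ⟨U, by rw [mul_assoc, hTU]; exact hUP⟩

end Polar
section IdealBasics

omit [CompleteSpace H]

variable {I J 𝒮 : Set (H →L[ℂ] H)}

namespace IsBHIdeal

theorem mul_mem_left_s19 (hI : IsBHIdeal I) (A : H →L[ℂ] H) {x : H →L[ℂ] H} (hx : x ∈ I) :
    A * x ∈ I :=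
  (hI.2.2.2 A x hx).1

theorem mul_mem_right_s19 (hI : IsBHIdeal I) (A : H →L[ℂ] H) {x : H →L[ℂ] H} (hx : x ∈ I) :
    x * A ∈ I :=
  (hI.2.2.2 A x hx).2

def toIntSubmodule (hI : IsBHIdeal I) : Submodule ℤ (H →L[ℂ] H) :=
  AddSubgroup.toIntSubmodule
    { carrier := I
      add_mem' := fun hx hy => hI.2.1 _ hx _ hy
      zero_mem' := hI.1
      neg_mem' := fun hx => hI.2.2.1 _ hx }

end IsBHIdeal

theorem isBHIdeal_genBH (𝒮 : Set (H →L[ℂ] H)) : IsBHIdeal (genBH 𝒮) :=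
  ⟨fun _ hI => hI.1.1, fun _ hx _ hy I hI => hI.1.2.1 _ (hx I hI) _ (hy I hI),
    fun _ hx I hI => hI.1.2.2.1 _ (hx I hI),
    fun A _ hx => ⟨fun I hI => hI.1.mul_mem_left_s19 A (hx I hI),
      fun I hI => hI.1.mul_mem_right_s19 A (hx I hI)⟩⟩

theorem subset_genBH : 𝒮 ⊆ genBH 𝒮 := fun _ hx _ hI => hI.2 hx

theorem genBH_subset (hI : IsBHIdeal I) (h𝒮 : 𝒮 ⊆ I) : genBH 𝒮 ⊆ I :=
  Set.sInter_subset_of_mem ⟨hI, h𝒮⟩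

theorem mul_mem_JGen {A X : H →L[ℂ] H} (hA : A ∈ J) (hX : X ∈ genBH 𝒮) :
    A * X ∈ JGen J 𝒮 :=
  ⟨1, ![A], ![X], Fin.forall_fin_one.2 ⟨hA, hX⟩, by simp⟩

theorem isBHIdeal_JGen (hJ : IsBHIdeal J) : IsBHIdeal (JGen J 𝒮) := by
  refine ⟨⟨0, ![], ![], nofun, by simp⟩, ?_, ?_, fun B _ hx => ⟨?_, ?_⟩⟩
  · rintro _ ⟨n, A, X, hAX, rfl⟩ _ ⟨m, A', X', hAX', rfl⟩
    refine ⟨n + m, Fin.append A A', Fin.append X X',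
      Fin.addCases (by simpa using hAX) (by simpa using hAX'), ?_⟩
    simp [Fin.sum_univ_add]
  · rintro _ ⟨n, A, X, hAX, rfl⟩
    exact ⟨n, -A, X, fun i => ⟨hJ.2.2.1 _ (hAX i).1, (hAX i).2⟩, by simp⟩
  · obtain ⟨n, A, X, hAX, rfl⟩ := hx
    exact ⟨n, (B * A ·), X, fun i => ⟨hJ.mul_mem_left_s19 B (hAX i).1, (hAX i).2⟩,
      by simp [Finset.mul_sum, mul_assoc]⟩
  · obtain ⟨n, A, X, hAX, rfl⟩ := hx
    exact ⟨n, A, (X · * B), fun i => ⟨(hAX i).1, (isBHIdeal_genBH 𝒮).mul_mem_right_s19 B (hAX i).2⟩,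
      by simp [Finset.sum_mul, mul_assoc]⟩

theorem JGen_subset_genBH : JGen J 𝒮 ⊆ genBH 𝒮 := by
  rintro _ ⟨n, A, X, hAX, rfl⟩
  exact (isBHIdeal_genBH 𝒮).toIntSubmodule.sum_mem fun i _ =>
    (isBHIdeal_genBH 𝒮).mul_mem_left_s19 (A i) (hAX i).2

theorem JGen_subset (hJ : IsBHIdeal J) : JGen J 𝒮 ⊆ J := by
  rintro _ ⟨n, A, X, hAX, rfl⟩
  exact hJ.toIntSubmodule.sum_mem fun i _ => hJ.mul_mem_right_s19 (X i) (hAX i).1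

def intSpanAddJGen (hJ : IsBHIdeal J) (𝒮 : Set (H →L[ℂ] H)) : Submodule ℤ (H →L[ℂ] H) :=
  (isBHIdeal_JGen (𝒮 := 𝒮) hJ).toIntSubmodule ⊔ Submodule.span ℤ 𝒮

theorem exists_mem_genSub_zsmul_eq
    (h : genSub J 𝒮 = genReal J 𝒮 ∨ genSub J 𝒮 = genLin J 𝒮) {x : H →L[ℂ] H} (hx : x ∈ 𝒮)
    {n : ℤ} (hn : n ≠ 0) : ∃ w ∈ genSub J 𝒮, n • w = x := by
  rcases h with h | h <;> rw [h]
  · refine ⟨(n : ℝ)⁻¹ • x, fun I hI => hI.1.2 _ _ (hI.2 hx), ?_⟩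
    rw [← Int.cast_smul_eq_zsmul ℝ, smul_smul, mul_inv_cancel₀ (Int.cast_ne_zero.2 hn), one_smul]
  · refine ⟨(n : ℂ)⁻¹ • x, fun I hI => hI.1.2 _ _ (hI.2 hx), ?_⟩
    rw [← Int.cast_smul_eq_zsmul ℂ, smul_smul, mul_inv_cancel₀ (Int.cast_ne_zero.2 hn), one_smul]

end IdealBasics

section SelfAdjointness

variable {I J 𝒮 : Set (H →L[ℂ] H)}

theorem IsBHIdeal.star_mem_s19 (hI : IsBHIdeal I) {x : H →L[ℂ] H} (hx : x ∈ I) : star x ∈ I := by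
  obtain ⟨U, hU⟩ := (star x).exists_mul_star_mul_eq
  rw [star_star] at hU
  exact hU ▸ hI.mul_mem_right_s19 _ (hI.mul_mem_left_s19 _ hx)

theorem mul_mem_JGen_of_mem_genBH (hJ : IsBHIdeal J) {X B : H →L[ℂ] H} (hX : X ∈ genBH 𝒮)
    (hB : B ∈ J) : X * B ∈ JGen J 𝒮 := by
  obtain ⟨U, hU⟩ := (X * B).exists_mul_star_mul_eq
  rw [← hU, star_mul, mul_assoc, mul_assoc, ← mul_assoc U]
  exact mul_mem_JGen (hJ.mul_mem_left_s19 U (hJ.star_mem_s19 hB))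
    ((isBHIdeal_genBH 𝒮).mul_mem_right_s19 U ((isBHIdeal_genBH 𝒮).star_mem_s19 hX))

theorem isSubideal_intSpanAddJGen (hJ : IsBHIdeal J) (h𝒮 : 𝒮 ⊆ J) :
    IsSubideal J (intSpanAddJGen hJ 𝒮) := by
  set soft := (isBHIdeal_JGen (𝒮 := 𝒮) hJ).toIntSubmodule
  have hmap : ∀ f : (H →L[ℂ] H) →ₗ[ℤ] (H →L[ℂ] H), (∀ x ∈ 𝒮, f x ∈ JGen J 𝒮) →
      (∀ x ∈ JGen J 𝒮, f x ∈ JGen J 𝒮) → ∀ x ∈ intSpanAddJGen hJ 𝒮,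
        f x ∈ intSpanAddJGen hJ 𝒮 := fun f h𝒮f hf x hx =>
    Submodule.mem_sup_left
      ((sup_le hf (Submodule.span_le.2 h𝒮f) : soft ⊔ _ ≤ soft.comap f) hx)
  refine ⟨(sup_le (JGen_subset hJ) (Submodule.span_le.2 h𝒮) : _ ≤ hJ.toIntSubmodule),
    zero_mem _, fun _ hx _ hy => add_mem hx hy, fun _ hx => neg_mem hx,
    fun A hA x hx => ⟨hmap (LinearMap.mulLeft ℤ A) ?_ ?_ x hx,
      hmap (LinearMap.mulRight ℤ A) ?_ ?_ x hx⟩⟩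
  · exact fun y hy => mul_mem_JGen hA (subset_genBH hy)
  · exact fun y hy => (isBHIdeal_JGen hJ).mul_mem_left_s19 A hy
  · exact fun y hy => mul_mem_JGen_of_mem_genBH hJ (subset_genBH hy) hA
  · exact fun y hy => (isBHIdeal_JGen hJ).mul_mem_right_s19 A hy

end SelfAdjointness

/-- if `⟨𝒮⟩_J = (𝒮)_J^ℝ` or `⟨𝒮⟩_J = (𝒮)_J`, then `(𝒮)` is `J`-soft. -/
theorem stmt_19 (J : Set (H →L[ℂ] H)) (hJ : IsBHIdeal J)
    (N : ℕ) (S : Fin N → (H →L[ℂ] H)) (hS : ∀ j, S j ∈ J)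
    (h : genSub J (Set.range S) = genReal J (Set.range S) ∨
         genSub J (Set.range S) = genLin J (Set.range S)) :
    genBH (Set.range S) = JGen J (Set.range S) := by
  have hsub : genSub J (Set.range S) ⊆ intSpanAddJGen hJ (Set.range S) :=
    Set.sInter_subset_of_mem
      ⟨isSubideal_intSpanAddJGen hJ (Set.range_subset_iff.2 hS),
        fun _ hx => Submodule.mem_sup_right (Submodule.subset_span hx)⟩
  have hSJ : ∀ j, S j ∈ JGen J (Set.range S) := fun j =>
    Submodule.mem_of_forall_exists_zsmul_eq _ (Set.finite_range S)
      (Submodule.subset_span ⟨j, rfl⟩) fun n hn => by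
        obtain ⟨w, hw, hnw⟩ := exists_mem_genSub_zsmul_eq h ⟨j, rfl⟩ hn
        exact ⟨w, hsub hw, hnw⟩
  exact (genBH_subset (isBHIdeal_JGen hJ) (Set.range_subset_iff.2 hSJ)).antisymm
    JGen_subset_genBH
end
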